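/- For any family P = {f₁,…,fₙ} of functions [0,1] → [0,1], the forest F(P) associated with P equals the downset in 𝔽ₙ of the set of equivalence classes [μ] that are realized by P at some x ∈ [0,1]. -/
import Mathlib


open unitInterval

/-- The extended value sequence 0, μ(X_{sg(1)}), …, μ(X_{sg(n)}), 1. -/
def seq (n : ℕ) (μ : Fin n → I) (sg : Equiv.Perm (Fin n)) : Fin (n + 2) → I :=
  fun i =>
    if h0 : (i : ℕ) = 0 then 0
    else if h : (i : ℕ) ≤ n then μ (sg ⟨(i : ℕ) - 1, by omega⟩) else 1

/-- μ ≡ₙ ν : some permutation sorts both, with identical equality/strictness pattern. -/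
def nEquiv (n : ℕ) (μ ν : Fin n → I) : Prop :=
  ∃ sg : Equiv.Perm (Fin n),
    Monotone (seq n μ sg) ∧ Monotone (seq n ν sg) ∧
      ∀ i : Fin (n + 1),
        (seq n μ sg i.castSucc = seq n μ sg i.succ ↔
          seq n ν sg i.castSucc = seq n ν sg i.succ)

/-- The forest order on assignments: [μ] ≤ [ν] iff some permutation sorts both, the patterns
agree up to index k, and μ's relations are equalities afterwards. -/
def leAssign (n : ℕ) (μ ν : Fin n → I) : Prop :=
  ∃ sg : Equiv.Perm (Fin n),
    Monotone (seq n μ sg) ∧ Monotone (seq n ν sg) ∧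
      ∃ k : ℕ, k ≤ n ∧
        (∀ i : Fin (n + 1), (i : ℕ) ≤ k →
          (seq n μ sg i.castSucc = seq n μ sg i.succ ↔
            seq n ν sg i.castSucc = seq n ν sg i.succ)) ∧
        (∀ i : Fin (n + 1), k < (i : ℕ) →
          seq n μ sg i.castSucc = seq n μ sg i.succ)

/-- Formulas of Gödel logic over n variables. -/
inductive Fml (n : ℕ) : Type
  | var : Fin n → Fml n
  | bot : Fml n
  | top : Fml n
  | and : Fml n → Fml n → Fml n
  | or : Fml n → Fml n → Fml n
  | imp : Fml n → Fml n → Fml n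
  | neg : Fml n → Fml n

open Classical in
/-- Gödel semantics. -/
noncomputable def eval {n : ℕ} (μ : Fin n → I) : Fml n → I
  | .var i => μ i
  | .bot => 0
  | .top => 1
  | .and a b => min (eval μ a) (eval μ b)
  | .or a b => max (eval μ a) (eval μ b)
  | .imp a b => if eval μ a ≤ eval μ b then 1 else eval μ b
  | .neg a => if eval μ a ≤ (0 : I) then 1 else 0

/-- `a` axiomatizes the theory of P: the formulas valid over P are exactly the
Gödel consequences of `a`. -/
def Axiomatizes {n : ℕ} (f : Fin n → I → I) (a : Fml n) : Prop :=
  ∀ φ : Fml n,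
    (∀ x : I, eval (fun i => f i x) φ = 1) ↔
      ∀ ν : Fin n → I, eval ν a = 1 → eval ν φ = 1

/-- [μ] is realized by P = {f₁,…,fₙ} at x: the values fᵢ(x) share μ's order/equality pattern. -/
def realizedAt {n : ℕ} (f : Fin n → I → I) (μ : Fin n → I) (x : I) : Prop :=
  nEquiv n μ fun i => f i x


/-! ### Auxiliary machinery -/

section SeqN

variable {n : ℕ}

/-- `ℕ`-indexed version of `seq`. -/
noncomputable def nseqN (n : ℕ) (μ : Fin n → I) (sg : Equiv.Perm (Fin n)) : ℕ → I :=
  fun m => seq n μ sg ⟨min m (n+1), by omega⟩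

lemma seq_eq_nseqN (μ : Fin n → I) (sg : Equiv.Perm (Fin n)) (i : Fin (n+2)) :
    seq n μ sg i = nseqN n μ sg i := by
  unfold nseqN
  congr 1
  exact Fin.ext (by simp [Nat.min_eq_left (by omega : (i:ℕ) ≤ n+1)])

lemma nseqN_zero (μ : Fin n → I) (sg : Equiv.Perm (Fin n)) : nseqN n μ sg 0 = 0 := by
  simp [nseqN, seq]

lemma nseqN_top (μ : Fin n → I) (sg : Equiv.Perm (Fin n)) {m : ℕ} (hm : n+1 ≤ m) :
    nseqN n μ sg m = 1 := by
  unfold nseqN seq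
  have h1 : min m (n+1) = n+1 := Nat.min_eq_right hm
  simp only [h1]
  rw [dif_neg (by omega), dif_neg (by omega)]

lemma nseqN_mid (μ : Fin n → I) (sg : Equiv.Perm (Fin n)) {m : ℕ} (hm0 : 1 ≤ m) (hmn : m ≤ n) :
    nseqN n μ sg m = μ (sg ⟨m - 1, by omega⟩) := by
  unfold nseqN seq
  have h1 : min m (n+1) = m := Nat.min_eq_left (by omega)
  simp only [h1]
  rw [dif_neg (by omega), dif_pos (by omega)]

lemma nseqN_mono {μ : Fin n → I} {sg : Equiv.Perm (Fin n)}
    (h : Monotone (seq n μ sg)) : Monotone (nseqN n μ sg) := by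
  intro i j hij
  exact h (by simp only [Fin.mk_le_mk]; omega)

lemma seq_mono_of_comp {μ : Fin n → I} {sg : Equiv.Perm (Fin n)}
    (h : Monotone (fun t => μ (sg t))) : Monotone (seq n μ sg) := by
  intro i j hij
  have hij' : (i:ℕ) ≤ (j:ℕ) := hij
  unfold seq
  by_cases hi0 : (i:ℕ) = 0
  · simp only [dif_pos hi0]; exact nonneg'
  · have hj0 : ¬((j:ℕ) = 0) := by omega
    simp only [dif_neg hi0, dif_neg hj0]
    by_cases hin : (i:ℕ) ≤ n
    · simp only [dif_pos hin]
      by_cases hjn : (j:ℕ) ≤ n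
      · simp only [dif_pos hjn]
        exact h (by simp only [Fin.mk_le_mk]; omega)
      · simp only [dif_neg hjn]; exact le_one'
    · have hjn : ¬((j:ℕ) ≤ n) := by omega
      simp only [dif_neg hin, dif_neg hjn]; exact le_rfl

/-- For a monotone sequence, two values are equal iff all the consecutive gaps
between them are equalities. -/
lemma mono_eq_iff (U : ℕ → I) (hU : Monotone U) (i j : ℕ) (hij : i ≤ j) :
    U i = U j ↔ ∀ l, i ≤ l → l < j → U l = U (l+1) := by
  constructor
  · intro h l hl hl'
    have h1 : U i ≤ U l := hU hl
    have h2 : U l ≤ U (l+1) := hU (Nat.le_succ l)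
    have h3 : U (l+1) ≤ U j := hU hl'
    rw [← h] at h3
    exact le_antisymm h2 (le_trans h3 h1)
  · intro h
    induction j, hij using Nat.le_induction with
    | base => rfl
    | succ j hij ih =>
      have : U i = U j := ih (fun l hl hl' => h l hl (by omega))
      rw [this]
      exact h j hij (by omega)

end SeqN

section Main

variable {n : ℕ} {lo hi : Fin n → I} {sg : Equiv.Perm (Fin n)} {k : ℕ}

/-- Transfer of equalities from the upper assignment to the lower one. -/
lemma transfer_down
    (hlo : Monotone (seq n lo sg)) (hhi : Monotone (seq n hi sg))
    (P : ∀ l : ℕ, l ≤ k →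
      (nseqN n lo sg l = nseqN n lo sg (l+1) ↔ nseqN n hi sg l = nseqN n hi sg (l+1)))
    (Q : ∀ l : ℕ, k < l → nseqN n lo sg l = nseqN n lo sg (l+1))
    {j₂ j₁ : ℕ} (h : j₂ ≤ j₁) (hB : nseqN n hi sg j₂ = nseqN n hi sg j₁) :
    nseqN n lo sg j₂ = nseqN n lo sg j₁ := by
  rw [mono_eq_iff _ (nseqN_mono hlo) _ _ h]
  intro l hl hl'
  rcases le_or_gt l k with hlk | hlk
  · exact (P l hlk).mpr ((mono_eq_iff _ (nseqN_mono hhi) _ _ h).mp hB l hl hl')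
  · exact Q l hlk

/-- Transfer of equalities from the lower assignment to the upper one, below level `k+1`. -/
lemma transfer_up
    (hlo : Monotone (seq n lo sg)) (hhi : Monotone (seq n hi sg))
    (P : ∀ l : ℕ, l ≤ k →
      (nseqN n lo sg l = nseqN n lo sg (l+1) ↔ nseqN n hi sg l = nseqN n hi sg (l+1)))
    {j₂ j₁ : ℕ} (h : j₂ ≤ j₁) (hk1 : j₁ ≤ k + 1) (hA : nseqN n lo sg j₂ = nseqN n lo sg j₁) :
    nseqN n hi sg j₂ = nseqN n hi sg j₁ := by
  rw [mono_eq_iff _ (nseqN_mono hhi) _ _ h]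
  intro l hl hl'
  exact (P l (by omega)).mp ((mono_eq_iff _ (nseqN_mono hlo) _ _ h).mp hA l hl hl')

lemma lo_top
    (hlo : Monotone (seq n lo sg))
    (Q : ∀ l : ℕ, k < l → nseqN n lo sg l = nseqN n lo sg (l+1))
    {j : ℕ} (hj : k + 1 ≤ j) : nseqN n lo sg j = 1 := by
  rcases le_or_gt j (n+1) with hjn | hjn
  · have : nseqN n lo sg j = nseqN n lo sg (n+1) := by
      rw [mono_eq_iff _ (nseqN_mono hlo) _ _ hjn]
      intro l hl _
      exact Q l (by omega)
    rw [this, nseqN_top _ _ le_rfl]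
  · exact nseqN_top _ _ (by omega)

/-- Main induction: along a `leAssign` witness, the truth values of any formula
at the lower and upper assignments occupy the same position of the two chains. -/
lemma main_lemma
    (hlo : Monotone (seq n lo sg)) (hhi : Monotone (seq n hi sg)) (hk : k ≤ n)
    (P : ∀ l : ℕ, l ≤ k →
      (nseqN n lo sg l = nseqN n lo sg (l+1) ↔ nseqN n hi sg l = nseqN n hi sg (l+1)))
    (Q : ∀ l : ℕ, k < l → nseqN n lo sg l = nseqN n lo sg (l+1)) :
    ∀ φ : Fml n, ∃ j : ℕ, j ≤ n + 1 ∧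
      eval lo φ = nseqN n lo sg j ∧ eval hi φ = nseqN n hi sg j := by
  have monoA := nseqN_mono hlo
  have monoB := nseqN_mono hhi
  intro φ
  induction φ with
  | var t =>
    refine ⟨(sg⁻¹ t : Fin n) + 1, by have := (sg⁻¹ t).isLt; omega, ?_, ?_⟩ <;>
    · rw [nseqN_mid _ _ (by omega) (by have := (sg⁻¹ t).isLt; omega)]
      simp [eval]
  | bot => exact ⟨0, by omega, by simp [eval, nseqN_zero]⟩
  | top => exact ⟨n+1, le_rfl, by simp [eval, nseqN_top _ _ le_rfl]⟩
  | and a b iha ihb =>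
    obtain ⟨j₁, hj₁, ha1, ha2⟩ := iha
    obtain ⟨j₂, hj₂, hb1, hb2⟩ := ihb
    refine ⟨min j₁ j₂, by omega, ?_, ?_⟩
    · show min (eval lo a) (eval lo b) = _
      rw [ha1, hb1, monoA.map_min]
    · show min (eval hi a) (eval hi b) = _
      rw [ha2, hb2, monoB.map_min]
  | or a b iha ihb =>
    obtain ⟨j₁, hj₁, ha1, ha2⟩ := iha
    obtain ⟨j₂, hj₂, hb1, hb2⟩ := ihb
    refine ⟨max j₁ j₂, by omega, ?_, ?_⟩
    · show max (eval lo a) (eval lo b) = _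
      rw [ha1, hb1, monoA.map_max]
    · show max (eval hi a) (eval hi b) = _
      rw [ha2, hb2, monoB.map_max]
  | imp a b iha ihb =>
    obtain ⟨j₁, hj₁, ha1, ha2⟩ := iha
    obtain ⟨j₂, hj₂, hb1, hb2⟩ := ihb
    have elo : eval lo (.imp a b) = if eval lo a ≤ eval lo b then 1 else eval lo b := rfl
    have ehi : eval hi (.imp a b) = if eval hi a ≤ eval hi b then 1 else eval hi b := rfl
    rw [elo, ehi, ha1, ha2, hb1, hb2]
    by_cases h1 : nseqN n lo sg j₁ ≤ nseqN n lo sg j₂ <;>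
      by_cases h2 : nseqN n hi sg j₁ ≤ nseqN n hi sg j₂
    · exact ⟨n+1, le_rfl, by rw [if_pos h1, nseqN_top _ _ le_rfl],
        by rw [if_pos h2, nseqN_top _ _ le_rfl]⟩
    · -- lo collapses, hi does not
      have hj21 : j₂ < j₁ := by
        by_contra hc
        exact h2 (monoB (by omega))
      have hA : nseqN n lo sg j₂ = nseqN n lo sg j₁ := le_antisymm (monoA hj21.le) h1
      rcases le_or_gt j₁ (k+1) with hcase | hcase
      · exact absurd ((transfer_up hlo hhi P hj21.le hcase hA).symm.le) h2
      · refine ⟨j₂, by omega, ?_, by rw [if_neg h2]⟩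
        rw [if_pos h1, hA, lo_top hlo Q (by omega)]
    · -- hi collapses, lo does not: impossible
      exfalso
      rcases le_or_gt j₁ j₂ with hc | hc
      · exact h1 (monoA hc)
      · have hB : nseqN n hi sg j₂ = nseqN n hi sg j₁ := le_antisymm (monoB hc.le) h2
        exact h1 (transfer_down hlo hhi P Q hc.le hB).symm.le
    · exact ⟨j₂, hj₂, by rw [if_neg h1], by rw [if_neg h2]⟩
  | neg a iha =>
    obtain ⟨j₁, hj₁, ha1, ha2⟩ := iha
    have elo : eval lo (.neg a) = if eval lo a ≤ (0:I) then 1 else 0 := rfl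
    have ehi : eval hi (.neg a) = if eval hi a ≤ (0:I) then 1 else 0 := rfl
    rw [elo, ehi, ha1, ha2]
    by_cases h1 : nseqN n lo sg j₁ ≤ (0:I) <;> by_cases h2 : nseqN n hi sg j₁ ≤ (0:I)
    · exact ⟨n+1, le_rfl, by rw [if_pos h1, nseqN_top _ _ le_rfl],
        by rw [if_pos h2, nseqN_top _ _ le_rfl]⟩
    · -- lo is zero, hi is not
      have hA : nseqN n lo sg 0 = nseqN n lo sg j₁ := by
        rw [nseqN_zero]; exact (le_antisymm h1 nonneg').symm
      rcases le_or_gt j₁ (k+1) with hcase | hcase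
      · exfalso
        have := transfer_up hlo hhi P (Nat.zero_le _) hcase hA
        rw [nseqN_zero] at this
        exact h2 this.symm.le
      · refine ⟨k+1, by omega, ?_, ?_⟩
        · rw [if_pos h1, lo_top hlo Q le_rfl]
        · rw [if_neg h2]
          have hAk : nseqN n lo sg 0 = nseqN n lo sg (k+1) := by
            rw [nseqN_zero]
            refine (le_antisymm (le_trans (monoA (by omega : k+1 ≤ j₁)) h1) nonneg').symm
          have := transfer_up hlo hhi P (Nat.zero_le _) le_rfl hAk
          rw [nseqN_zero] at this
          exact this
    · -- hi is zero, lo is not: impossible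
      exfalso
      have hB : nseqN n hi sg 0 = nseqN n hi sg j₁ := by
        rw [nseqN_zero]; exact (le_antisymm h2 nonneg').symm
      have := transfer_down hlo hhi P Q (Nat.zero_le _) hB
      rw [nseqN_zero] at this
      exact h1 this.symm.le
    · exact ⟨0, by omega, by rw [if_neg h1, nseqN_zero], by rw [if_neg h2, nseqN_zero]⟩

end Main

section Consume

variable {n : ℕ}

lemma gap_castSucc (μ : Fin n → I) (sg : Equiv.Perm (Fin n)) (i : Fin (n+1)) :
    seq n μ sg i.castSucc = nseqN n μ sg i ∧ seq n μ sg i.succ = nseqN n μ sg (i+1) := by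
  constructor
  · rw [seq_eq_nseqN]; rfl
  · rw [seq_eq_nseqN]
    congr 1

/-- Convert the `Fin`-indexed pattern conditions of `leAssign` to `ℕ`-indexed ones. -/
lemma leAssign_PQ {lo hi : Fin n → I} {sg : Equiv.Perm (Fin n)} {k : ℕ} (hk : k ≤ n)
    (hiff : ∀ i : Fin (n + 1), (i : ℕ) ≤ k →
      (seq n lo sg i.castSucc = seq n lo sg i.succ ↔
        seq n hi sg i.castSucc = seq n hi sg i.succ))
    (htop : ∀ i : Fin (n + 1), k < (i : ℕ) →
      seq n lo sg i.castSucc = seq n lo sg i.succ) :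
    (∀ l : ℕ, l ≤ k →
      (nseqN n lo sg l = nseqN n lo sg (l+1) ↔ nseqN n hi sg l = nseqN n hi sg (l+1))) ∧
    (∀ l : ℕ, k < l → nseqN n lo sg l = nseqN n lo sg (l+1)) := by
  constructor
  · intro l hl
    have hln : l ≤ n := le_trans hl hk
    have h1 := gap_castSucc lo sg ⟨l, by omega⟩
    have h2 := gap_castSucc hi sg ⟨l, by omega⟩
    rw [← h1.1, ← h1.2, ← h2.1, ← h2.2]
    exact hiff ⟨l, by omega⟩ hl
  · intro l hl
    rcases le_or_gt l n with hln | hln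
    · have h1 := gap_castSucc lo sg ⟨l, by omega⟩
      rw [← h1.1, ← h1.2]
      exact htop ⟨l, by omega⟩ hl
    · rw [nseqN_top _ _ (by omega), nseqN_top _ _ (by omega)]

/-- Truth is inherited downwards along the forest order. -/
lemma eval_one_of_le {lo hi : Fin n → I} (h : leAssign n lo hi) {φ : Fml n}
    (hφ : eval hi φ = 1) : eval lo φ = 1 := by
  obtain ⟨sg, hlo, hhi, k, hk, hiff, htop⟩ := h
  obtain ⟨P, Q⟩ := leAssign_PQ hk hiff htop
  obtain ⟨j, hj, e1, e2⟩ := main_lemma hlo hhi hk P Q φ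
  have hB : nseqN n hi sg j = nseqN n hi sg (n+1) := by
    rw [nseqN_top _ _ le_rfl, ← hφ, e2]
  have hA := transfer_down hlo hhi P Q hj hB
  rw [e1, hA, nseqN_top _ _ le_rfl]

lemma nEquiv.leAssign {μ ν : Fin n → I} (h : nEquiv n μ ν) : leAssign n μ ν := by
  obtain ⟨sg, h1, h2, h3⟩ := h
  exact ⟨sg, h1, h2, n, le_rfl, fun i _ => h3 i, fun i hi => absurd i.isLt (by omega)⟩

lemma nEquiv.symm {μ ν : Fin n → I} (h : nEquiv n μ ν) : nEquiv n ν μ := by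
  obtain ⟨sg, h1, h2, h3⟩ := h
  exact ⟨sg, h2, h1, fun i => (h3 i).symm⟩

end Consume

section Formulas

variable {n : ℕ}

/-- Finite conjunction. -/
def conjF (L : List (Fml n)) : Fml n := L.foldr .and .top

/-- Finite disjunction. -/
def disjF (L : List (Fml n)) : Fml n := L.foldr .or .bot

lemma eval_conjF_eq_one {μ : Fin n → I} {L : List (Fml n)} :
    eval μ (conjF L) = 1 ↔ ∀ ψ ∈ L, eval μ ψ = 1 := by
  induction L with
  | nil => simp [conjF, eval]
  | cons a l ih =>
    have : eval μ (conjF (a :: l)) = min (eval μ a) (eval μ (conjF l)) := rfl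
    rw [this]
    simp only [List.mem_cons]
    rw [show (1:I) = ⊤ from rfl, min_eq_top]
    constructor
    · rintro ⟨h1, h2⟩ ψ (rfl | hm)
      · exact h1
      · exact ih.mp h2 ψ hm
    · intro h
      exact ⟨h a (Or.inl rfl), ih.mpr fun ψ hm => h ψ (Or.inr hm)⟩

lemma eval_conjF_le {μ : Fin n → I} {L : List (Fml n)} {ψ : Fml n} (h : ψ ∈ L) :
    eval μ (conjF L) ≤ eval μ ψ := by
  induction L with
  | nil => simp at h
  | cons a l ih =>
    have e : eval μ (conjF (a :: l)) = min (eval μ a) (eval μ (conjF l)) := rfl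
    rcases List.mem_cons.mp h with rfl | hm
    · rw [e]; exact min_le_left _ _
    · rw [e]; exact le_trans (min_le_right _ _) (ih hm)

lemma eval_disjF_eq_one {μ : Fin n → I} {L : List (Fml n)} :
    eval μ (disjF L) = 1 ↔ ∃ ψ ∈ L, eval μ ψ = 1 := by
  induction L with
  | nil => simp [disjF, eval]
  | cons a l ih =>
    have e : eval μ (disjF (a :: l)) = max (eval μ a) (eval μ (disjF l)) := rfl
    rw [e, show (1:I) = ⊤ from rfl, max_eq_top]
    simp only [List.mem_cons]
    constructor
    · rintro (h | h)
      · exact ⟨a, Or.inl rfl, h⟩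
      · obtain ⟨ψ, hm, hψ⟩ := ih.mp h
        exact ⟨ψ, Or.inr hm, hψ⟩
    · rintro ⟨ψ, (rfl | hm), hψ⟩
      · exact Or.inl hψ
      · exact Or.inr (ih.mpr ⟨ψ, hm, hψ⟩)

lemma le_eval_disjF {μ : Fin n → I} {L : List (Fml n)} {ψ : Fml n} (h : ψ ∈ L) :
    eval μ ψ ≤ eval μ (disjF L) := by
  induction L with
  | nil => simp at h
  | cons a l ih =>
    have e : eval μ (disjF (a :: l)) = max (eval μ a) (eval μ (disjF l)) := rfl
    rcases List.mem_cons.mp h with rfl | hm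
    · rw [e]; exact le_max_left _ _
    · rw [e]; exact le_trans (ih hm) (le_max_right _ _)

end Formulas

section Phi

variable {n : ℕ}

def pairList (n : ℕ) : List (Fin n × Fin n) :=
  (List.finRange n).flatMap fun t => (List.finRange n).map fun s => (t, s)

lemma mem_pairList (t s : Fin n) : (t, s) ∈ pairList n := by
  simp [pairList, List.mem_flatMap, List.mem_map, List.mem_finRange]

/-- Conjuncts expressing the equalities of the pattern of ν. -/
noncomputable def epsList (ν : Fin n → I) : List (Fml n) :=
  ((pairList n).map fun p => if ν p.1 = ν p.2 ∧ ν p.1 < 1 then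
      .and (.imp (.var p.1) (.var p.2)) (.imp (.var p.2) (.var p.1)) else .top)
  ++ (List.finRange n).map fun t => if ν t = 0 then .neg (.var t) else .top

/-- Disjuncts expressing failures of the strict inequalities of the pattern of ν. -/
noncomputable def sigList (ν : Fin n → I) : List (Fml n) :=
  ((pairList n).map fun p => if ν p.1 < ν p.2 then .imp (.var p.2) (.var p.1) else .bot)
  ++ (((List.finRange n).map fun t => if 0 < ν t then .neg (.var t) else .bot)
  ++ (List.finRange n).map fun t => if ν t < 1 then .var t else .bot)

/-- The characteristic formula of the complement of the upset of [ν]. -/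
noncomputable def phiF (ν : Fin n → I) : Fml n :=
  .imp (conjF (epsList ν)) (disjF (sigList ν))

/-- The semantic conditions expressing that ρ lies above ν in the forest order. -/
def Cond (ν ρ : Fin n → I) : Prop :=
  (∀ t, ν t = 0 → ρ t = 0) ∧ (∀ t s, ν t = ν s → ν t < 1 → ρ t = ρ s) ∧
  (∀ t s, ν t < ν s → ρ t < ρ s) ∧ (∀ t, 0 < ν t → 0 < ρ t) ∧ (∀ t, ν t < 1 → ρ t < 1)

lemma cond_refl (ν : Fin n → I) : Cond ν ν :=
  ⟨fun _ h => h, fun _ _ h _ => h, fun _ _ h => h, fun _ h => h, fun _ h => h⟩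

lemma eval_phi_ne_one_of_cond {ν ρ : Fin n → I} (h : Cond ν ρ) : eval ρ (phiF ν) ≠ 1 := by
  obtain ⟨h1, h2, h3, h4, h5⟩ := h
  have hσ : eval ρ (disjF (sigList ν)) ≠ 1 := by
    intro hone
    obtain ⟨ψ, hm, hψ⟩ := eval_disjF_eq_one.mp hone
    rcases List.mem_append.mp hm with hm' | hm'
    · obtain ⟨p, _, rfl⟩ := List.mem_map.mp hm'
      by_cases hc : ν p.1 < ν p.2
      · rw [if_pos hc] at hψ
        have hlt := h3 _ _ hc
        have e : eval ρ (.imp (.var p.2) (.var p.1)) =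
            if ρ p.2 ≤ ρ p.1 then 1 else ρ p.1 := rfl
        rw [e, if_neg (not_le.mpr hlt)] at hψ
        exact absurd hψ (ne_of_lt (lt_of_lt_of_le hlt le_one'))
      · rw [if_neg hc] at hψ
        exact absurd hψ (by norm_num [eval])
    · rcases List.mem_append.mp hm' with hm'' | hm''
      · obtain ⟨t, _, rfl⟩ := List.mem_map.mp hm''
        by_cases hc : 0 < ν t
        · rw [if_pos hc] at hψ
          have e : eval ρ (.neg (.var t)) = if ρ t ≤ (0:I) then 1 else 0 := rfl
          rw [e, if_neg (not_le.mpr (h4 _ hc))] at hψ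
          exact absurd hψ (by norm_num)
        · rw [if_neg hc] at hψ
          exact absurd hψ (by norm_num [eval])
      · obtain ⟨t, _, rfl⟩ := List.mem_map.mp hm''
        by_cases hc : ν t < 1
        · rw [if_pos hc] at hψ
          exact absurd hψ (ne_of_lt (h5 _ hc))
        · rw [if_neg hc] at hψ
          exact absurd hψ (by norm_num [eval])
  have hε : eval ρ (conjF (epsList ν)) = 1 := by
    rw [eval_conjF_eq_one]
    intro ψ hm
    rcases List.mem_append.mp hm with hm' | hm'
    · obtain ⟨p, _, rfl⟩ := List.mem_map.mp hm'
      by_cases hc : ν p.1 = ν p.2 ∧ ν p.1 < 1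
      · rw [if_pos hc]
        have heq := h2 _ _ hc.1 hc.2
        have e : eval ρ (.and (.imp (.var p.1) (.var p.2)) (.imp (.var p.2) (.var p.1))) =
            min (if ρ p.1 ≤ ρ p.2 then 1 else ρ p.2) (if ρ p.2 ≤ ρ p.1 then 1 else ρ p.1) := rfl
        rw [e, if_pos heq.le, if_pos heq.ge]
        simp
      · rw [if_neg hc]; rfl
    · obtain ⟨t, _, rfl⟩ := List.mem_map.mp hm'
      by_cases hc : ν t = 0
      · rw [if_pos hc]
        have e : eval ρ (.neg (.var t)) = if ρ t ≤ (0:I) then 1 else 0 := rfl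
        rw [e, if_pos (h1 _ hc).le]
      · rw [if_neg hc]; rfl
  have e : eval ρ (phiF ν) =
      if eval ρ (conjF (epsList ν)) ≤ eval ρ (disjF (sigList ν)) then 1
      else eval ρ (disjF (sigList ν)) := rfl
  rw [e, hε, if_neg]
  · exact hσ
  · intro hle
    exact hσ (le_antisymm le_one' hle)

lemma cond_of_eval_phi_ne_one {ν ρ : Fin n → I} (h : eval ρ (phiF ν) ≠ 1) : Cond ν ρ := by
  have e : eval ρ (phiF ν) =
      if eval ρ (conjF (epsList ν)) ≤ eval ρ (disjF (sigList ν)) then 1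
      else eval ρ (disjF (sigList ν)) := rfl
  by_cases hc : eval ρ (conjF (epsList ν)) ≤ eval ρ (disjF (sigList ν))
  · rw [e, if_pos hc] at h; exact absurd rfl h
  · rw [e, if_neg hc] at h
    -- h : eval σ ≠ 1, hc : ¬ (ε ≤ σ)
    have hσ : ∀ ψ ∈ sigList ν, eval ρ ψ ≠ 1 := by
      intro ψ hm hψ
      exact h (eval_disjF_eq_one.mpr ⟨ψ, hm, hψ⟩)
    have h3 : ∀ t s, ν t < ν s → ρ t < ρ s := by
      intro t s hts
      have hm : (if ν t < ν s then Fml.imp (.var s) (.var t) else .bot) ∈ sigList ν :=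
        List.mem_append.mpr (Or.inl (List.mem_map.mpr ⟨(t, s), mem_pairList t s, rfl⟩))
      rw [if_pos hts] at hm
      have := hσ _ hm
      have e2 : eval ρ (.imp (.var s) (.var t)) =
          if ρ s ≤ ρ t then 1 else ρ t := rfl
      rw [e2] at this
      by_contra hle
      rw [if_pos (not_lt.mp hle)] at this
      exact this rfl
    have h4 : ∀ t, 0 < ν t → 0 < ρ t := by
      intro t ht
      have hm : (if 0 < ν t then Fml.neg (.var t) else .bot) ∈ sigList ν :=
        List.mem_append.mpr (Or.inr (List.mem_append.mpr (Or.inl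
          (List.mem_map.mpr ⟨t, List.mem_finRange t, rfl⟩))))
      rw [if_pos ht] at hm
      have := hσ _ hm
      have e2 : eval ρ (.neg (.var t)) = if ρ t ≤ (0:I) then 1 else 0 := rfl
      rw [e2] at this
      by_contra hle
      rw [if_pos (not_lt.mp hle)] at this
      exact this rfl
    have h5 : ∀ t, ν t < 1 → ρ t < 1 := by
      intro t ht
      have hm : (if ν t < 1 then Fml.var t else .bot) ∈ sigList ν :=
        List.mem_append.mpr (Or.inr (List.mem_append.mpr (Or.inr
          (List.mem_map.mpr ⟨t, List.mem_finRange t, rfl⟩))))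
      rw [if_pos ht] at hm
      exact lt_of_le_of_ne le_one' (hσ _ hm)
    have key : ∀ t, ν t < 1 → eval ρ (.var t) ≤ eval ρ (disjF (sigList ν)) := by
      intro t ht
      have hm : (if ν t < 1 then Fml.var t else .bot) ∈ sigList ν :=
        List.mem_append.mpr (Or.inr (List.mem_append.mpr (Or.inr
          (List.mem_map.mpr ⟨t, List.mem_finRange t, rfl⟩))))
      rw [if_pos ht] at hm
      exact le_eval_disjF hm
    have h2 : ∀ t s, ν t = ν s → ν t < 1 → ρ t = ρ s := by
      intro t s hts ht1
      by_contra hne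
      have hm : (if ν t = ν s ∧ ν t < 1 then
            Fml.and (.imp (.var t) (.var s)) (.imp (.var s) (.var t)) else .top) ∈ epsList ν :=
        List.mem_append.mpr (Or.inl (List.mem_map.mpr ⟨(t, s), mem_pairList t s, rfl⟩))
      rw [if_pos ⟨hts, ht1⟩] at hm
      have hconj := eval_conjF_le (μ := ρ) hm
      have e2 : eval ρ (.and (.imp (.var t) (.var s)) (.imp (.var s) (.var t))) =
          min (if ρ t ≤ ρ s then 1 else ρ s) (if ρ s ≤ ρ t then 1 else ρ t) := rfl
      rcases lt_or_gt_of_ne hne with hlt | hlt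
      · rw [e2, if_pos hlt.le, if_neg (not_le.mpr hlt)] at hconj
        refine hc (le_trans hconj (le_trans (min_le_right _ _) (key t ht1)))
      · rw [e2, if_neg (not_le.mpr hlt), if_pos hlt.le] at hconj
        refine hc (le_trans hconj (le_trans (min_le_left _ _) (key s (hts ▸ ht1))))
    have h1 : ∀ t, ν t = 0 → ρ t = 0 := by
      intro t ht
      by_contra hne
      have hm : (if ν t = 0 then Fml.neg (.var t) else .top) ∈ epsList ν :=
        List.mem_append.mpr (Or.inr (List.mem_map.mpr ⟨t, List.mem_finRange t, rfl⟩))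
      rw [if_pos ht] at hm
      have hconj := eval_conjF_le (μ := ρ) hm
      have e2 : eval ρ (.neg (.var t)) = if ρ t ≤ (0:I) then 1 else 0 := rfl
      rw [e2, if_neg (fun hle => hne (le_antisymm hle nonneg'))] at hconj
      exact hc (le_trans hconj nonneg')
    exact ⟨h1, h2, h3, h4, h5⟩

end Phi

section Sorting

variable {n : ℕ}

lemma mem_iff_lt_card (S : Finset (Fin n))
    (hS : ∀ p q : Fin n, p ≤ q → q ∈ S → p ∈ S) (p : Fin n) : p ∈ S ↔ (p:ℕ) < S.card := by
  constructor
  · intro hp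
    have hsub : Finset.Iic p ⊆ S := fun q hq => hS q p (Finset.mem_Iic.mp hq) hp
    have := Finset.card_le_card hsub
    rw [Fin.card_Iic] at this; omega
  · intro hp
    by_contra hnp
    have hsub : S ⊆ Finset.Iio p := by
      intro q hq
      rw [Finset.mem_Iio]
      rcases lt_or_ge q p with h | h
      · exact h
      · exact absurd (hS p q h hq) hnp
    have := Finset.card_le_card hsub
    rw [Fin.card_Iio] at this; omega

lemma zero_lt_one_I : (0:I) < 1 := by norm_num

lemma cond_leAssign {ν ρ : Fin n → I} (h : Cond ν ρ) : leAssign n ν ρ := by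
  obtain ⟨h1, h2, h3, h4, h5⟩ := h
  set sg := Tuple.sort ρ with hsg
  have hρmono : Monotone (fun t => ρ (sg t)) := Tuple.monotone_sort ρ
  have hνmono : Monotone (fun t => ν (sg t)) := by
    intro i j hij
    by_contra hlt
    push_neg at hlt
    exact absurd (hρmono hij) (not_le.mpr (h3 _ _ hlt))
  set T := Finset.univ.filter (fun p : Fin n => ν (sg p) < 1) with hTdef
  have hT : ∀ p q : Fin n, p ≤ q → q ∈ T → p ∈ T := by
    intro p q hpq hq
    rw [hTdef, Finset.mem_filter] at *
    exact ⟨Finset.mem_univ p, lt_of_le_of_lt (hνmono hpq) hq.2⟩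
  have hmem : ∀ p : Fin n, ν (sg p) < 1 ↔ (p:ℕ) < T.card := by
    intro p
    rw [← mem_iff_lt_card T hT p, hTdef, Finset.mem_filter]
    simp
  set k := T.card with hkdef
  have hk : k ≤ n := le_trans (Finset.card_filter_le _ _) (by rw [Finset.card_fin])
  have hNlt : ∀ m : ℕ, m ≤ n + 1 → (nseqN n ν sg m < 1 ↔ m ≤ k) := by
    intro m hm
    rcases Nat.eq_zero_or_pos m with rfl | hm0
    · rw [nseqN_zero]
      exact ⟨fun _ => Nat.zero_le k, fun _ => zero_lt_one_I⟩
    · rcases Nat.lt_or_ge m (n+1) with hmn | hmn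
      · rw [nseqN_mid _ _ hm0 (by omega)]
        rw [hmem ⟨m-1, by omega⟩]
        simp only [Fin.val_mk]
        omega
      · rw [nseqN_top _ _ (by omega)]
        constructor
        · intro hlt; exact absurd hlt (lt_irrefl _)
        · intro hle; omega
  have hN1 : ∀ m : ℕ, m ≤ n + 1 → k < m → nseqN n ν sg m = 1 := by
    intro m hm hkm
    have := (hNlt m hm).not
    rw [not_lt, not_le] at this
    exact le_antisymm le_one' (this.mpr hkm)
  refine ⟨sg, seq_mono_of_comp hνmono, seq_mono_of_comp hρmono, k, hk, ?_, ?_⟩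
  · -- pattern agreement below k
    intro i hik
    have hin : (i:ℕ) ≤ n := by omega
    obtain ⟨c1, c2⟩ := gap_castSucc ν sg i
    obtain ⟨d1, d2⟩ := gap_castSucc ρ sg i
    rw [c1, c2, d1, d2]
    rcases Nat.eq_zero_or_pos (i:ℕ) with hi0 | hi0
    · rw [hi0, nseqN_zero, nseqN_zero]
      rcases Nat.eq_zero_or_pos n with rfl | hn0
      · rw [nseqN_top _ _ (by omega), nseqN_top _ _ (by omega)]
      · rw [nseqN_mid _ _ (by omega) (by omega), nseqN_mid _ _ (by omega) (by omega)]
        constructor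
        · intro hz
          exact (h1 _ hz.symm).symm
        · intro hz
          by_contra hnz
          exact absurd hz (ne_of_lt (h4 _ (lt_of_le_of_ne nonneg' hnz)))
    · rcases Nat.lt_or_ge (i:ℕ) n with hilt | hige
      · -- middle gap: two variables
        rw [nseqN_mid _ _ hi0 hin, nseqN_mid _ _ (by omega) (by omega),
          nseqN_mid ρ _ hi0 hin, nseqN_mid ρ _ (by omega) (by omega)]
        have ht1 : ν (sg ⟨(i:ℕ) - 1, by omega⟩) < 1 := by
          rw [hmem]; simp only [Fin.val_mk]; omega
        constructor
        · intro he
          exact h2 _ _ he ht1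
        · intro he
          by_contra hne
          have hlt : ν (sg ⟨(i:ℕ) - 1, by omega⟩) < ν (sg ⟨(i:ℕ) + 1 - 1, by omega⟩) :=
            lt_of_le_of_ne (hνmono (by simp only [Fin.mk_le_mk]; omega)) hne
          exact absurd he (ne_of_lt (h3 _ _ hlt))
      · -- last gap: i = n, so k = n
        have hieq : (i:ℕ) = n := by omega
        rw [nseqN_mid _ _ hi0 hin, nseqN_top _ _ (by omega),
          nseqN_mid ρ _ hi0 hin, nseqN_top ρ _ (by omega)]
        have ht1 : ν (sg ⟨(i:ℕ) - 1, by omega⟩) < 1 := by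
          rw [hmem]; simp only [Fin.val_mk]; omega
        constructor
        · intro he; exact absurd he (ne_of_lt ht1)
        · intro he; exact absurd he (ne_of_lt (h5 _ ht1))
  · -- equalities above k
    intro i hik
    obtain ⟨c1, c2⟩ := gap_castSucc ν sg i
    rw [c1, c2]
    rw [hN1 _ (by omega) (by omega), hN1 _ (by omega) (by omega)]

lemma nEquiv_refl (ρ : Fin n → I) : nEquiv n ρ ρ :=
  ⟨Tuple.sort ρ, seq_mono_of_comp (Tuple.monotone_sort ρ),
    seq_mono_of_comp (Tuple.monotone_sort ρ), fun _ => Iff.rfl⟩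

end Sorting

theorem FP_eq_downset_of_realized {n : ℕ} (f : Fin n → I → I) (a : Fml n)
    (ha : Axiomatizes f a) :
    {ν : Fin n → I | eval ν a = 1} =
      {ν : Fin n → I | ∃ μ x, realizedAt f μ x ∧ leAssign n ν μ} := by
  ext ν
  simp only [Set.mem_setOf_eq]
  constructor
  · intro hν
    by_contra H
    push_neg at H
    have hvalid : ∀ x : I, eval (fun i => f i x) (phiF ν) = 1 := by
      intro x
      by_contra hne
      have hle := cond_leAssign (cond_of_eval_phi_ne_one hne)
      have hreal : realizedAt f (fun i => f i x) x := nEquiv_refl _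
      exact H (fun i => f i x) x hreal hle
    exact eval_phi_ne_one_of_cond (cond_refl ν) ((ha (phiF ν)).mp hvalid ν hν)
  · rintro ⟨μ, x, hreal, hle⟩
    have hval : eval (fun i => f i x) a = 1 := ((ha a).mpr (fun _ h => h)) x
    have hreal' : nEquiv n μ (fun i => f i x) := hreal
    have h1 : eval μ a = 1 := eval_one_of_le (nEquiv.leAssign hreal') hval
    exact eval_one_of_le hle h1
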